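/- Fix an alphabet Σ and generative probabilistic systems γ : X → PMF (Σ × X) and δ : Y → PMF (Σ × Y), with cone functions μ^γ and μ^δ defined recursively by μ^γ x [] = 1, μ^γ x (a :: v) = ∑'_{x'} (γ x)(a, x') * μ^γ x' v (similarly for δ), and iterates γ^(0)(x) = PMF.pure ([], x), γ^(n+1)(x) = (γ^(n)(x)).bind (fun (u, z) => (γ z).map (fun (a, z') => (u ++ [a], z'))) (similarly for δ). Then states x ∈ X and y ∈ Y are α-trace equivalent, i.e. (γ^(n)(x)).map (fun (u, z) => u) = (δ^(n)(y)).map (fun (u, z) => u) for all n < ω, if and only if μ^γ x v = μ^δ y v for every word v ∈ List Σ; i.e. iff the two states assign the same probability to every cone v↑ of Σ^ω. -/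
import Mathlib


open scoped ENNReal

/-- Iterates of a generative probabilistic system `γ : X → PMF (A × X)`. -/
noncomputable def pIter {A X : Type*} (γ : X → PMF (A × X)) :
    ℕ → X → PMF (List A × X)
  | 0 => fun x => PMF.pure ([], x)
  | n + 1 => fun x =>
      (pIter γ n x).bind fun p => (γ p.2).map fun q => (p.1 ++ [q.1], q.2)

/-- The cone function of a generative probabilistic system. -/
noncomputable def coneProb {A X : Type*} (γ : X → PMF (A × X)) :
    X → List A → ℝ≥0∞
  | _, [] => 1
  | x, a :: v => ∑' x' : X, (γ x) (a, x') * coneProb γ x' v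

lemma pIter_succ' {A X : Type*} (γ : X → PMF (A × X)) (n : ℕ) (x : X) :
    pIter γ (n + 1) x =
      (γ x).bind fun q => (pIter γ n q.2).map fun p => (q.1 :: p.1, p.2) := by
  induction n generalizing x with
  | zero =>
      simp only [pIter, PMF.pure_bind, PMF.pure_map]
      rfl
  | succ n ih =>
      show (pIter γ (n+1) x).bind _ = _
      rw [ih, PMF.bind_bind]
      congr 1
      funext q
      show ((pIter γ n q.2).map _).bind _ = (pIter γ (n+1) q.2).map _
      rw [PMF.bind_map]
      show _ = ((pIter γ n q.2).bind _).map _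
      rw [PMF.map_bind]
      congr 1
      funext p
      rw [PMF.map_comp]
      rfl

lemma keyEval {A X : Type*} (γ : X → PMF (A × X)) :
    ∀ (n : ℕ) (x : X) (v : List A),
      ((pIter γ n x).map fun p => p.1) v =
        if v.length = n then coneProb γ x v else 0 := by
  classical
  intro n
  induction n with
  | zero =>
      intro x v
      simp only [pIter, PMF.pure_map, PMF.pure_apply]
      cases v <;> simp [coneProb]
  | succ n ih =>
      intro x v
      rw [pIter_succ', PMF.map_bind, PMF.bind_apply]
      cases v with
      | nil =>
          simp only [List.length_nil]
          rw [if_neg (by omega)]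
          refine ENNReal.tsum_eq_zero.2 fun q => ?_
          have : ((PMF.map (fun p => p.1) ((pIter γ n q.2).map fun p => (q.1 :: p.1, p.2)))) ([] : List A) = 0 := by
            rw [PMF.map_comp, PMF.map_apply]
            refine ENNReal.tsum_eq_zero.2 fun p => ?_
            simp [Function.comp]
          rw [this, mul_zero]
      | cons a v =>
          have inner : ∀ q : A × X,
              ((PMF.map (fun p => p.1) ((pIter γ n q.2).map fun p => (q.1 :: p.1, p.2)))) (a :: v)
                = if q.1 = a then ((pIter γ n q.2).map fun p => p.1) v else 0 := by
            intro q
            rw [PMF.map_comp, PMF.map_apply]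
            by_cases h : q.1 = a
            · subst h
              rw [if_pos rfl, PMF.map_apply]
              refine tsum_congr fun p => ?_
              simp [Function.comp]
            · rw [if_neg h]
              refine ENNReal.tsum_eq_zero.2 fun p => ?_
              have : ¬ (a :: v = ((fun p => p.1) ∘ fun p => (q.1 :: p.1, p.2)) p) := by
                simp only [Function.comp, List.cons.injEq]
                rintro ⟨hh, -⟩
                exact h hh.symm
              exact if_neg this
          calc (∑' q : A × X, (γ x) q *
                ((PMF.map (fun p => p.1) ((pIter γ n q.2).map fun p => (q.1 :: p.1, p.2)))) (a :: v))
              = ∑' q : A × X, (γ x) q * (if q.1 = a then ((pIter γ n q.2).map fun p => p.1) v else 0) :=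
                tsum_congr fun q => by rw [inner q]
            _ = ∑' b : A, ∑' x' : X, (γ x) (b, x') * (if b = a then ((pIter γ n x').map fun p => p.1) v else 0) := by
                rw [ENNReal.tsum_prod']
            _ = ∑' b : A, (if b = a then ∑' x' : X, (γ x) (a, x') * ((pIter γ n x').map fun p => p.1) v else 0) := by
                refine tsum_congr fun b => ?_
                by_cases h : b = a
                · subst h; simp
                · simp [h]
            _ = ∑' x' : X, (γ x) (a, x') * ((pIter γ n x').map fun p => p.1) v :=
                tsum_ite_eq a _
            _ = if (a :: v).length = n + 1 then coneProb γ x (a :: v) else 0 := by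
                by_cases h : v.length = n
                · rw [if_pos (by simpa using h)]
                  show _ = coneProb γ x (a :: v)
                  rw [coneProb]
                  exact tsum_congr fun x' => by rw [ih x' v, if_pos h]
                · rw [if_neg (by simpa using h)]
                  refine ENNReal.tsum_eq_zero.2 fun x' => ?_
                  rw [ih x' v, if_neg h, mul_zero]


/-- two states of generative probabilistic systems are `α`-trace
equivalent iff they assign the same probability to every cone. -/
theorem stmt14 {A X Y : Type*} (γ : X → PMF (A × X)) (δ : Y → PMF (A × Y))
    (x : X) (y : Y) :
    (∀ n : ℕ, ((pIter γ n x).map fun p => p.1) = ((pIter δ n y).map fun p => p.1)) ↔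
      ∀ v : List A, coneProb γ x v = coneProb δ y v := by
  constructor
  · intro h v
    have h1 := keyEval γ v.length x v
    have h2 := keyEval δ v.length y v
    rw [if_pos rfl] at h1 h2
    rw [← h1, ← h2, h v.length]
  · intro h n
    ext v
    rw [keyEval γ n x v, keyEval δ n y v]
    by_cases hl : v.length = n
    · rw [if_pos hl, if_pos hl, h v]
    · rw [if_neg hl, if_neg hl]
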